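/- Fundamental Lemma (rank form): If the system x_{k+1}=Ax_k+Bu_k is controllable and the input sequence u_0,...,u_{T-1} is persistently exciting of order L+n, then the matrix col(X, H_L(u)), where X = [x_0, ..., x_{T-L}] collects the states along the trajectory, has full row rank n + mL; consequently the range of col(H_L(u), H_L(y)) equals the set of all L-long input-output trajectories of the system. -/

import Mathlib

/-!
A row vector `(ξ, η)` annihilating `col(X, H_L(u))` is a functional
`ξ ⬝ x_j + ∑_{t<L} η_t ⬝ u_{j+t}` vanishing on every window. Substituting
`x_{j+1} = A x_j + B u_j` shifts it to the functional with state weight `ξ A^k` and input weights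
`ξ A^{k-1} B, …, ξ B, η` on windows `k` steps longer. Combining the shifts `k = 0, …, n` with the
coefficients of the characteristic polynomial of `A` removes the state weight (Cayley–Hamilton),
so persistency of excitation of order `L + n` makes every input weight of the combination vanish.
As the characteristic polynomial is monic, these are the terms of a reverse linear recurrence for
the input weights of the `n`-fold shift `(ξ A^{n-1} B, …, ξ B, η)`, which vanish eventually and
hence everywhere. So `η = 0` and `ξ A^k B = 0` for `k < n`, and controllability gives `ξ = 0`.

Full row rank makes every initial state and input window a combination `g` of the columns of
`col(X, H_L(u))`; since the system is linear and shift invariant, `H_L(y) g` is then the output of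
that trajectory.
-/

open Matrix Finset Polynomial

/-- Block-Hankel matrix of depth `L` built from `w_0, …, w_{T-1} ∈ ℝ^q`. -/
def blockHankel (q T L : ℕ) (w : ℕ → Fin q → ℝ) :
    Matrix (Fin L × Fin q) (Fin (T - L + 1)) ℝ :=
  fun r j => w (r.1.1 + j.1) r.2

namespace Matrix

variable {m n K : Type*} [Fintype m] [Fintype n] [Field K]

theorem rank_eq_card_iff_injective_vecMul {M : Matrix m n K} :
    M.rank = Fintype.card m ↔ Function.Injective M.vecMul := by
  rw [vecMul_injective_iff]
  refine ⟨fun h => linearIndependent_iff_card_eq_finrank_span.mpr ?_, LinearIndependent.rank_matrix⟩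
  rw [Set.finrank, ← rank_eq_finrank_span_row, h]

theorem surjective_mulVec_of_rank_eq_card {M : Matrix m n K} (h : M.rank = Fintype.card m) :
    Function.Surjective M.mulVec := by
  have hrange : LinearMap.range M.mulVecLin = ⊤ :=
    Submodule.eq_top_of_finrank_eq (by rw [← rank, h, Module.finrank_fintype_fun_eq_card])
  exact LinearMap.range_eq_top.mp hrange

end Matrix

theorem Polynomial.Monic.eq_zero_of_reverse_recurrence {R M : Type*} [Semiring R]
    [AddCommMonoid M] [Module R M] {p : R[X]} (hp : p.Monic) {G : ℕ → M} {N : ℕ}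
    (hG : ∀ t, N ≤ t → G t = 0)
    (hrec : ∀ t < N, ∑ k ∈ range (p.natDegree + 1), p.coeff k • G (t + p.natDegree - k) = 0)
    (t : ℕ) : G t = 0 := by
  induction h : N - t using Nat.strong_induction_on generalizing t with
  | _ s ih =>
    by_cases ht : N ≤ t
    · exact hG t ht
    have hlater : ∀ k ∈ range p.natDegree, p.coeff k • G (t + p.natDegree - k) = 0 := by
      intro k hk
      have hk := mem_range.mp hk
      by_cases hN : N ≤ t + p.natDegree - k
      · rw [hG _ hN, smul_zero]
      · rw [ih (N - (t + p.natDegree - k)) (by omega) _ rfl, smul_zero]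
    simpa [sum_range_succ, sum_eq_zero hlater, hp.coeff_natDegree] using hrec t (by omega)

def IsPersistentlyExciting (q T K : ℕ) (w : ℕ → Fin q → ℝ) : Prop :=
  (blockHankel q T K w).rank = q * K

theorem vecMul_blockHankel {q T K : ℕ} (w : ℕ → Fin q → ℝ) (F : ℕ → Fin q → ℝ)
    (j : Fin (T - K + 1)) :
    ((fun ta : Fin K × Fin q => F ta.1 ta.2) ᵥ* blockHankel q T K w) j
      = ∑ t ∈ range K, F t ⬝ᵥ w (t + j) := by
  rw [← Fin.sum_univ_eq_sum_range (fun t => F t ⬝ᵥ w (t + j))]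
  simp [vecMul, dotProduct, blockHankel, Fintype.sum_prod_type]

theorem IsPersistentlyExciting.eq_zero_of_forall_sum_dotProduct_eq_zero {q T K : ℕ}
    {w : ℕ → Fin q → ℝ} (hPE : IsPersistentlyExciting q T K w) {F : ℕ → Fin q → ℝ}
    (hF : ∀ j ≤ T - K, ∑ t ∈ range K, F t ⬝ᵥ w (t + j) = 0) {t : ℕ} (ht : t < K) :
    F t = 0 := by
  have hinj : Function.Injective (blockHankel q T K w).vecMul :=
    rank_eq_card_iff_injective_vecMul.mp (by simpa [IsPersistentlyExciting, mul_comm] using hPE)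
  have hzero : (fun ta : Fin K × Fin q => F ta.1 ta.2) = 0 :=
    hinj <| funext fun j => by
      dsimp only
      rw [vecMul_blockHankel, zero_vecMul]
      exact hF j (Nat.lt_succ_iff.mp j.isLt)
  exact funext fun a => congrFun hzero (⟨t, ht⟩, a)

theorem sum_smul_eq_mulVec_add_mulVec {ι p q r R : Type*} [Fintype q] [Fintype r]
    [CommSemiring R] (s : Finset ι) (g : ι → R) (P : Matrix p q R) (Q : Matrix p r R)
    {z : ι → p → R} {a : ι → q → R} {b : ι → r → R} (h : ∀ j, z j = P *ᵥ a j + Q *ᵥ b j) :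
    ∑ j ∈ s, g j • z j = P *ᵥ ∑ j ∈ s, g j • a j + Q *ᵥ ∑ j ∈ s, g j • b j := by
  simp [h, smul_add, sum_add_distrib, mulVec_sum, mulVec_smul]

def shiftedCombination {c q : ℕ} (g : Fin c → ℝ) (w : ℕ → Fin q → ℝ) (k : ℕ) : Fin q → ℝ :=
  ∑ j, g j • w (k + j)

theorem blockHankel_mulVec {q T L : ℕ} (w : ℕ → Fin q → ℝ) (g : Fin (T - L + 1) → ℝ)
    (i : Fin L) (a : Fin q) :
    (blockHankel q T L w *ᵥ g) (i, a) = shiftedCombination g w i a := by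
  simp [blockHankel, shiftedCombination, mulVec, dotProduct, mul_comm]

theorem forall_blockHankel_mulVec_eq_iff {q T L : ℕ} (w : ℕ → Fin q → ℝ)
    (g : Fin (T - L + 1) → ℝ) (wb : Fin L → Fin q → ℝ) :
    (∀ i : Fin L, ∀ a, (blockHankel q T L w *ᵥ g) (i, a) = wb i a) ↔
      ∀ i : Fin L, shiftedCombination g w i = wb i := by
  simp only [blockHankel_mulVec, funext_iff]

def stateInputHankel {n m : ℕ} (T L : ℕ) (x : ℕ → Fin n → ℝ) (u : ℕ → Fin m → ℝ) :
    Matrix (Fin n ⊕ Fin L × Fin m) (Fin (T - L + 1)) ℝ :=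
  Matrix.of fun r j => Sum.elim (fun s => x j.1 s) (fun km => u (km.1.1 + j.1) km.2) r

theorem stateInputHankel_eq_fromRows {n m : ℕ} (T L : ℕ) (x : ℕ → Fin n → ℝ)
    (u : ℕ → Fin m → ℝ) :
    stateInputHankel T L x u
      = fromRows (Matrix.of fun s (j : Fin (T - L + 1)) => x j s) (blockHankel m T L u) := by
  ext (_ | _) _ <;> rfl

section LinearSystem

variable {n m : ℕ} (A : Matrix (Fin n) (Fin n) ℝ) (B : Matrix (Fin n) (Fin m) ℝ)

def controllabilityMatrix : Matrix (Fin n) (Fin n × Fin m) ℝ :=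
  Matrix.of fun i jc => (A ^ (jc.1 : ℕ) * B) i jc.2

variable {A B} in
theorem eq_zero_of_forall_vecMul_pow_mul_eq_zero (hctrb : (controllabilityMatrix A B).rank = n)
    {ξ : Fin n → ℝ} (h : ∀ k < n, ξ ᵥ* (A ^ k * B) = 0) : ξ = 0 := by
  refine rank_eq_card_iff_injective_vecMul.mp (by simpa using hctrb) (funext fun jc => ?_)
  simpa [controllabilityMatrix, vecMul, dotProduct] using congrFun (h jc.1 jc.1.isLt) jc.2

variable (x : ℕ → Fin n → ℝ) (u : ℕ → Fin m → ℝ)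

/-- Weights `(ξ, η)` stand for the row vector `(ξ, η_0, …, η_{N-1})` acting on the column
`col(x_j, u_j, …, u_{j+N-1})` of the data. -/
def windowPairing (N j : ℕ) : (Fin n → ℝ) × (ℕ → Fin m → ℝ) →ₗ[ℝ] ℝ where
  toFun φ := φ.1 ⬝ᵥ x j + ∑ t ∈ range N, φ.2 t ⬝ᵥ u (t + j)
  map_add' φ ψ := by
    simp only [Prod.fst_add, Prod.snd_add, Pi.add_apply, add_dotProduct, sum_add_distrib]
    ring
  map_smul' c φ := by
    simp only [Prod.smul_fst, Prod.smul_snd, Pi.smul_apply, smul_dotProduct, smul_eq_mul,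
      mul_add, mul_sum, RingHom.id_apply]

def shiftWeights (φ : (Fin n → ℝ) × (ℕ → Fin m → ℝ)) : (Fin n → ℝ) × (ℕ → Fin m → ℝ) :=
  (φ.1 ᵥ* A, fun t => Nat.casesOn t (φ.1 ᵥ* B) φ.2)

variable {x u}

theorem windowPairing_succ (hx : ∀ k, x (k + 1) = A *ᵥ x k + B *ᵥ u k) (N j : ℕ)
    (φ : (Fin n → ℝ) × (ℕ → Fin m → ℝ)) :
    windowPairing x u N (j + 1) φ = windowPairing x u (N + 1) j (shiftWeights A B φ) := by
  have hu : ∀ t, u (t + (j + 1)) = u (t + 1 + j) := fun t => by rw [add_right_comm, add_assoc]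
  simp only [windowPairing, LinearMap.coe_mk, AddHom.coe_mk]
  rw [sum_range_succ', hx, dotProduct_add, dotProduct_mulVec, dotProduct_mulVec]
  simp only [hu, zero_add]
  rw [add_assoc, add_comm (_ ⬝ᵥ u j)]
  rfl

theorem windowPairing_add (hx : ∀ k, x (k + 1) = A *ᵥ x k + B *ᵥ u k) (N j k : ℕ)
    (φ : (Fin n → ℝ) × (ℕ → Fin m → ℝ)) :
    windowPairing x u N (j + k) φ = windowPairing x u (N + k) j ((shiftWeights A B)^[k] φ) := by
  induction k generalizing j with
  | zero => rfl
  | succ k ih =>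
    rw [← add_assoc, add_right_comm, ih, windowPairing_succ A B hx, Function.iterate_succ_apply',
      add_assoc]

theorem windowPairing_eq_of_le {N N' : ℕ} (hN : N ≤ N') (j : ℕ)
    {φ : (Fin n → ℝ) × (ℕ → Fin m → ℝ)} (hφ : ∀ t, N ≤ t → φ.2 t = 0) :
    windowPairing x u N' j φ = windowPairing x u N j φ := by
  simp only [windowPairing, LinearMap.coe_mk, AddHom.coe_mk, add_right_inj]
  refine (sum_subset (range_subset_range.mpr hN) fun t _ ht => ?_).symm
  rw [hφ t (by simpa using ht), zero_dotProduct]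

theorem shiftWeights_iterate_fst (k : ℕ) (φ : (Fin n → ℝ) × (ℕ → Fin m → ℝ)) :
    ((shiftWeights A B)^[k] φ).1 = φ.1 ᵥ* A ^ k := by
  induction k with
  | zero => simp
  | succ k ih =>
    rw [Function.iterate_succ_apply', shiftWeights, ih, vecMul_vecMul, pow_succ]

theorem shiftWeights_iterate_snd_add (k t : ℕ) (φ : (Fin n → ℝ) × (ℕ → Fin m → ℝ)) :
    ((shiftWeights A B)^[k] φ).2 (t + k) = φ.2 t := by
  induction k with
  | zero => rfl
  | succ k ih => rw [Function.iterate_succ_apply', ← ih]; rfl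

theorem shiftWeights_iterate_snd_of_le {k d : ℕ} (hk : k ≤ d) (t : ℕ)
    (φ : (Fin n → ℝ) × (ℕ → Fin m → ℝ)) :
    ((shiftWeights A B)^[k] φ).2 t = ((shiftWeights A B)^[d] φ).2 (t + d - k) := by
  rw [← shiftWeights_iterate_snd_add A B (d - k), ← Function.iterate_add_apply,
    Nat.sub_add_cancel hk, Nat.add_sub_assoc hk]

theorem shiftWeights_iterate_snd_eq_zero {L k t : ℕ} (ht : L + k ≤ t)
    {φ : (Fin n → ℝ) × (ℕ → Fin m → ℝ)} (hφ : ∀ t, L ≤ t → φ.2 t = 0) :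
    ((shiftWeights A B)^[k] φ).2 t = 0 := by
  rw [← Nat.sub_add_cancel (le_of_add_le_right ht), shiftWeights_iterate_snd_add]
  exact hφ _ (by omega)

theorem shiftWeights_iterate_succ_snd_zero (k : ℕ) (φ : (Fin n → ℝ) × (ℕ → Fin m → ℝ)) :
    ((shiftWeights A B)^[k + 1] φ).2 0 = φ.1 ᵥ* (A ^ k * B) := by
  rw [Function.iterate_succ_apply', ← vecMul_vecMul, ← shiftWeights_iterate_fst A B]
  rfl

variable {A B}

theorem eq_zero_of_forall_windowPairing_eq_zero {T L : ℕ} (hT : L + n ≤ T)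
    (hx : ∀ k, x (k + 1) = A *ᵥ x k + B *ᵥ u k) (hctrb : (controllabilityMatrix A B).rank = n)
    (hPE : IsPersistentlyExciting m T (L + n) u) {φ : (Fin n → ℝ) × (ℕ → Fin m → ℝ)}
    (hφ : ∀ t, L ≤ t → φ.2 t = 0) (h0 : ∀ j ≤ T - L, windowPairing x u L j φ = 0) :
    φ = 0 := by
  set p := A.charpoly
  have hdeg : p.natDegree = n := by simp [p]
  set S := shiftWeights A B
  set ψ := ∑ k ∈ range (n + 1), p.coeff k • S^[k] φ
  have hψ₁ : ψ.1 = 0 := by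
    simp only [ψ, Prod.fst_sum, Prod.smul_fst, shiftWeights_iterate_fst, S, ← vecMul_smul,
      ← vecMul_sum]
    rw [← aeval_eq_sum_range' (by omega) A, aeval_self_charpoly, vecMul_zero]
  have hψ : ∀ j ≤ T - (L + n), windowPairing x u (L + n) j ψ = 0 := fun j hj => by
    simp only [ψ, map_sum, map_smul]
    refine sum_eq_zero fun k hk => ?_
    have hk : k ≤ n := Nat.lt_succ_iff.mp (mem_range.mp hk)
    rw [windowPairing_eq_of_le (by omega) j fun t ht => shiftWeights_iterate_snd_eq_zero A B ht hφ,
      ← windowPairing_add A B hx, h0 _ (by omega), smul_zero]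
  have hψ₂ : ∀ t < L + n, ψ.2 t = 0 := fun t ht =>
    hPE.eq_zero_of_forall_sum_dotProduct_eq_zero (fun j hj => by
      simpa [windowPairing, hψ₁] using hψ j hj) ht
  have hS : ∀ k ≤ n, ∀ t, (S^[k] φ).2 t = (S^[n] φ).2 (t + n - k) := fun k hk t =>
    shiftWeights_iterate_snd_of_le A B hk t φ
  have hG : ∀ t, (S^[n] φ).2 t = 0 :=
    (charpoly_monic A).eq_zero_of_reverse_recurrence (N := L + n)
      (fun t ht => shiftWeights_iterate_snd_eq_zero A B ht hφ)
      (fun t ht => by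
        rw [hdeg, ← hψ₂ t ht]
        simp only [ψ, Prod.snd_sum, Prod.smul_snd, Finset.sum_apply, Pi.smul_apply]
        exact sum_congr rfl fun k hk => by rw [hS k (Nat.lt_succ_iff.mp (mem_range.mp hk))])
  have hξ : φ.1 = 0 := eq_zero_of_forall_vecMul_pow_mul_eq_zero hctrb fun k hk => by
    rw [← shiftWeights_iterate_succ_snd_zero, hS (k + 1) hk, hG]
  have hη : φ.2 = 0 := funext fun t => by
    simpa [S] using (hS 0 (Nat.zero_le n) t).trans (hG _)
  exact Prod.ext hξ hη

theorem injective_vecMul_stateInputHankel {T L : ℕ} (hT : L + n ≤ T)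
    (hx : ∀ k, x (k + 1) = A *ᵥ x k + B *ᵥ u k) (hctrb : (controllabilityMatrix A B).rank = n)
    (hPE : IsPersistentlyExciting m T (L + n) u) :
    Function.Injective (stateInputHankel T L x u).vecMul := by
  rw [← coe_vecMulLinear, injective_iff_map_eq_zero]
  intro v hv
  set η : ℕ → Fin m → ℝ := fun t a => if h : t < L then v (Sum.inr (⟨t, h⟩, a)) else 0
  have hvη : v ∘ Sum.inr = fun ta : Fin L × Fin m => η ta.1 ta.2 := by
    ext ⟨t, a⟩
    simp [η]
  have hφ : ((v ∘ Sum.inl, η) : (Fin n → ℝ) × (ℕ → Fin m → ℝ)) = 0 := by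
    refine eq_zero_of_forall_windowPairing_eq_zero hT hx hctrb hPE
      (fun t ht => funext fun a => by simp [η, not_lt.mpr ht]) fun j hj => ?_
    have hvj := congrFun hv ⟨j, Nat.lt_succ_of_le hj⟩
    rw [vecMulLinear_apply, stateInputHankel_eq_fromRows, vecMul_fromRows, hvη, Pi.add_apply,
      vecMul_blockHankel] at hvj
    simpa [windowPairing, vecMul, dotProduct, mul_comm] using hvj
  ext (s | ⟨t, a⟩)
  · exact congrFun (congrArg Prod.fst hφ) s
  · simpa [η] using congrFun (congrFun (congrArg Prod.snd hφ) t) a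

theorem shiftedCombination_succ (hx : ∀ k, x (k + 1) = A *ᵥ x k + B *ᵥ u k) {c : ℕ}
    (g : Fin c → ℝ) (k : ℕ) :
    shiftedCombination g x (k + 1)
      = A *ᵥ shiftedCombination g x k + B *ᵥ shiftedCombination g u k :=
  sum_smul_eq_mulVec_add_mulVec _ g A B fun j => by rw [add_right_comm, hx]

theorem shiftedCombination_output {p : ℕ} {C : Matrix (Fin p) (Fin n) ℝ}
    {D : Matrix (Fin p) (Fin m) ℝ} {y : ℕ → Fin p → ℝ} (hy : ∀ k, y k = C *ᵥ x k + D *ᵥ u k)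
    {c : ℕ} (g : Fin c → ℝ) (k : ℕ) :
    shiftedCombination g y k = C *ᵥ shiftedCombination g x k + D *ᵥ shiftedCombination g u k :=
  sum_smul_eq_mulVec_add_mulVec _ g C D fun _ => hy _

theorem state_eq_of_initial_state_eq {L : ℕ} {xs xs' : ℕ → Fin n → ℝ}
    {v : Fin L → Fin m → ℝ} (hxs : ∀ i : Fin L, xs (i + 1) = A *ᵥ xs i + B *ᵥ v i)
    (hxs' : ∀ i : Fin L, xs' (i + 1) = A *ᵥ xs' i + B *ᵥ v i) (h0 : xs 0 = xs' 0) :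
    ∀ k ≤ L, xs k = xs' k
  | 0, _ => h0
  | k + 1, hk => by
    rw [hxs ⟨k, hk⟩, hxs' ⟨k, hk⟩, state_eq_of_initial_state_eq hxs hxs' h0 k (by omega)]

end LinearSystem

theorem fundamental_lemma_rank_general (n m p T L : ℕ) (hT : L + n ≤ T)
    (A : Matrix (Fin n) (Fin n) ℝ) (B : Matrix (Fin n) (Fin m) ℝ)
    (C : Matrix (Fin p) (Fin n) ℝ) (D : Matrix (Fin p) (Fin m) ℝ)
    (hctrb : (Matrix.of (fun (i : Fin n) (jc : Fin n × Fin m) =>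
        (A ^ (jc.1 : ℕ) * B) i jc.2)).rank = n)
    (x : ℕ → Fin n → ℝ) (u : ℕ → Fin m → ℝ) (y : ℕ → Fin p → ℝ)
    (hx : ∀ k, x (k + 1) = A.mulVec (x k) + B.mulVec (u k))
    (hy : ∀ k, y k = C.mulVec (x k) + D.mulVec (u k))
    (hPE : (blockHankel m T (L + n) u).rank = m * (L + n)) :
    (Matrix.of (fun (r : Fin n ⊕ Fin L × Fin m) (j : Fin (T - L + 1)) =>
        Sum.elim (fun s => x j.1 s) (fun km => u (km.1.1 + j.1) km.2) r)).rank
      = n + m * L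
    ∧ ∀ (ub : Fin L → Fin m → ℝ) (yb : Fin L → Fin p → ℝ),
        ((∃ g : Fin (T - L + 1) → ℝ,
            (∀ i : Fin L, ∀ a, (blockHankel m T L u).mulVec g (i, a) = ub i a)
            ∧ (∀ i : Fin L, ∀ a, (blockHankel p T L y).mulVec g (i, a) = yb i a))
          ↔ ∃ xs : ℕ → Fin n → ℝ,
              ∀ i : Fin L,
                xs (i + 1) = A.mulVec (xs i) + B.mulVec (ub i)
                ∧ yb i = C.mulVec (xs i) + D.mulVec (ub i)) := by
  have hrank : (stateInputHankel T L x u).rank = n + m * L := by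
    rw [rank_eq_card_iff_injective_vecMul.mpr (injective_vecMul_stateInputHankel hT hx hctrb hPE)]
    simp [mul_comm]
  refine ⟨hrank, fun ub yb => ⟨?_, ?_⟩⟩
  · rintro ⟨g, hgu, hgy⟩
    rw [forall_blockHankel_mulVec_eq_iff] at hgu hgy
    refine ⟨shiftedCombination g x, fun i => ⟨?_, ?_⟩⟩
    · rw [← hgu, shiftedCombination_succ hx]
    · rw [← hgu, ← hgy, shiftedCombination_output hy]
  · rintro ⟨xs, hxs⟩
    obtain ⟨g, hg⟩ := surjective_mulVec_of_rank_eq_card (M := stateInputHankel T L x u)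
      (by simp [hrank, mul_comm]) (Sum.elim (xs 0) fun ia : Fin L × Fin m => ub ia.1 ia.2)
    rw [stateInputHankel_eq_fromRows, fromRows_mulVec, Sum.elim_eq_iff] at hg
    have hgu := (forall_blockHankel_mulVec_eq_iff u g ub).mp fun i a => congrFun hg.2 (i, a)
    have hx0 : shiftedCombination g x 0 = xs 0 := funext fun s => by
      simpa [shiftedCombination, mulVec, dotProduct, mul_comm] using congrFun hg.1 s
    have hstate := state_eq_of_initial_state_eq
      (fun i => hgu i ▸ shiftedCombination_succ hx g i) (fun i => (hxs i).1) hx0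
    refine ⟨g, (forall_blockHankel_mulVec_eq_iff u g ub).mpr hgu,
      (forall_blockHankel_mulVec_eq_iff y g yb).mpr fun i => ?_⟩
    rw [shiftedCombination_output hy, hgu, hstate i i.isLt.le, (hxs i).2]

/-- Fundamental Lemma, rank form: if `x_{k+1} = A x_k + B u_k` is
controllable and `u` is persistently exciting of order `L + n`, then the matrix
`col(X, H_L(u))` with `X = [x_0, …, x_{T-L}]` has full row rank `n + m * L`;
consequently the range of `col(H_L(u), H_L(y))` is exactly the set of `L`-long
input-output trajectories of the system. -/
theorem fundamental_lemma_rank (n m p T L : ℕ) (hL : 1 ≤ L) (hT : L + n ≤ T)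
    (A : Matrix (Fin n) (Fin n) ℝ) (B : Matrix (Fin n) (Fin m) ℝ)
    (C : Matrix (Fin p) (Fin n) ℝ) (D : Matrix (Fin p) (Fin m) ℝ)
    (hctrb : (Matrix.of (fun (i : Fin n) (jc : Fin n × Fin m) =>
        (A ^ (jc.1 : ℕ) * B) i jc.2)).rank = n)
    (x : ℕ → Fin n → ℝ) (u : ℕ → Fin m → ℝ) (y : ℕ → Fin p → ℝ)
    (hx : ∀ k, x (k + 1) = A.mulVec (x k) + B.mulVec (u k))
    (hy : ∀ k, y k = C.mulVec (x k) + D.mulVec (u k))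
    (hPE : (blockHankel m T (L + n) u).rank = m * (L + n)) :
    (Matrix.of (fun (r : Fin n ⊕ Fin L × Fin m) (j : Fin (T - L + 1)) =>
        Sum.elim (fun s => x j.1 s) (fun km => u (km.1.1 + j.1) km.2) r)).rank
      = n + m * L
    ∧ ∀ (ub : Fin L → Fin m → ℝ) (yb : Fin L → Fin p → ℝ),
        ((∃ g : Fin (T - L + 1) → ℝ,
            (∀ i : Fin L, ∀ a, (blockHankel m T L u).mulVec g (i, a) = ub i a)
            ∧ (∀ i : Fin L, ∀ a, (blockHankel p T L y).mulVec g (i, a) = yb i a))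
          ↔ ∃ xs : ℕ → Fin n → ℝ,
              ∀ i : Fin L,
                xs (i + 1) = A.mulVec (xs i) + B.mulVec (ub i)
                ∧ yb i = C.mulVec (xs i) + D.mulVec (ub i)) :=
  fundamental_lemma_rank_general n m p T L hT A B C D hctrb x u y hx hy hPE
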